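/- Let G be a symmetric positive definite n×n real matrix, σ > 0, and Σ = σ²·G⁻¹. Let H₁, H₂ be symmetric positive semidefinite n×n real matrices with rank(H₁) ≤ rank(H₂). If L₁ and L₂ are real numbers such that t ↦ (1/4)·Tr(Σ·G·(I − exp(−2t·(G·H₁)))) converges to L₁ and t ↦ (1/4)·Tr(Σ·G·(I − exp(−2t·(G·H₂)))) converges to L₂ as t → ∞, then L₁ ≤ L₂. (Proposition 4 in the isotropic case Σ·G = σ²·I: a larger Hessian rank gives a larger asymptotic expected loss.) -/

import Mathlib

/-!
Since `Σ·G = σ²·I`, the loss is `σ²/4 · (n − Tr exp(−2t·G·H))`. Writing `S = √G`, the matrix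
`G·H = S·(S·H·S)·S⁻¹` is similar to the positive semidefinite matrix `S·H·S`, which has the rank
of `H`. Diagonalising it, `Tr exp(−2t·S·H·S) = ∑ᵢ exp(−2t·μᵢ)` with all `μᵢ ≥ 0`; the terms with
`μᵢ > 0` vanish as `t → ∞` and the others are `1`, so the trace tends to `n − rank H` and the
loss to `σ²/4 · rank H`, which is monotone in the rank.
-/

open Matrix Filter Topology
open scoped MatrixOrder

namespace Matrix

variable {ι : Type*} [Fintype ι] [DecidableEq ι]

theorem trace_exp_units_conj {𝔸 : Type*} [NormedCommRing 𝔸] [NormedAlgebra ℚ 𝔸]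
    [CompleteSpace 𝔸] (U : (Matrix ι ι 𝔸)ˣ) (A : Matrix ι ι 𝔸) :
    trace (NormedSpace.exp (U * A * U⁻¹ : Matrix ι ι 𝔸)) = trace (NormedSpace.exp A) := by
  rw [exp_units_conj, trace_mul_cycle, Units.inv_mul, one_mul]

theorem IsHermitian.trace_exp_smul {A : Matrix ι ι ℝ} (hA : A.IsHermitian) (c : ℝ) :
    trace (NormedSpace.exp (c • A)) = ∑ i, Real.exp (c * hA.eigenvalues i) := by
  set U := Unitary.toUnits hA.eigenvectorUnitary
  have hsmul : c • A = (U * diagonal (c • hA.eigenvalues) * U⁻¹ : Matrix ι ι ℝ) := by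
    have hspec := hA.spectral_theorem
    simp only [Unitary.conjStarAlgAut_apply, RCLike.ofReal_real_eq_id, Function.id_comp] at hspec
    conv_lhs => rw [hspec]
    rw [diagonal_smul, mul_smul_comm, smul_mul_assoc]
    rfl
  rw [hsmul, trace_exp_units_conj, exp_diagonal, trace_diagonal, Pi.exp_def, Real.exp_eq_exp_ℝ]
  rfl

theorem PosSemidef.tendsto_trace_exp_neg_smul {A : Matrix ι ι ℝ} (hA : A.PosSemidef) :
    Tendsto (fun t : ℝ => trace (NormedSpace.exp ((-t) • A))) atTop
      (𝓝 (Fintype.card ι - A.rank)) := by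
  set μ := hA.isHermitian.eigenvalues
  have hterm (i : ι) :
      Tendsto (fun t : ℝ => Real.exp (-t * μ i)) atTop (𝓝 (if μ i = 0 then 1 else 0)) := by
    rcases (show 0 ≤ μ i from hA.eigenvalues_nonneg i).eq_or_lt with hzero | hpos
    · simp [← hzero]
    · rw [if_neg hpos.ne']
      exact Real.tendsto_exp_atBot.comp (tendsto_neg_atTop_atBot.atBot_mul_const hpos)
  have hcount : ∑ i, (if μ i = 0 then 1 else 0 : ℝ) = Fintype.card ι - A.rank := by
    rw [Finset.sum_boole, hA.isHermitian.rank_eq_card_non_zero_eigs, Fintype.card_subtype,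
      eq_sub_iff_add_eq]
    exact_mod_cast Finset.card_filter_add_card_filter_not _
  simp_rw [hA.isHermitian.trace_exp_smul]
  rw [← hcount]
  exact tendsto_finsetSum _ fun i _ => hterm i

theorem PosDef.tendsto_trace_exp_neg_smul_mul {G H : Matrix ι ι ℝ} (hG : G.PosDef)
    (hH : H.PosSemidef) :
    Tendsto (fun t : ℝ => trace (NormedSpace.exp ((-t) • (G * H)))) atTop
      (𝓝 (Fintype.card ι - H.rank)) := by
  have hS : (CFC.sqrt G).PosDef := (IsStrictlyPositive.sqrt G hG.isStrictlyPositive).posDef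
  obtain ⟨S, hSG⟩ := hS.isUnit
  have hSS : (S * S : Matrix ι ι ℝ) = G := hSG ▸ CFC.sqrt_mul_sqrt_self G hG.posSemidef.nonneg
  have hSH : (S * H * S : Matrix ι ι ℝ).PosSemidef := by
    have h := hH.mul_mul_conjTranspose_same (CFC.sqrt G)
    rwa [hS.isHermitian.eq, ← hSG] at h
  have hrank : (S * H * S : Matrix ι ι ℝ).rank = H.rank := by
    have hdet : IsUnit (S : Matrix ι ι ℝ).det := (isUnit_iff_isUnit_det _).mp S.isUnit
    rw [rank_mul_eq_left_of_isUnit_det _ _ hdet, rank_mul_eq_right_of_isUnit_det _ _ hdet]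
  have hsimilar (t : ℝ) : (-t) • (G * H) = (S * ((-t) • (S * H * S)) * S⁻¹ : Matrix ι ι ℝ) := by
    rw [← hSS, mul_smul_comm, smul_mul_assoc]
    simp only [mul_assoc, Units.mul_inv, mul_one]
  simp_rw [hsimilar, trace_exp_units_conj, ← hrank]
  exact hSH.tendsto_trace_exp_neg_smul

end Matrix

noncomputable def expectedLoss {ι : Type*} [Fintype ι] [DecidableEq ι]
    (Sg G H : Matrix ι ι ℝ) (t : ℝ) : ℝ :=
  (1 / 4) * trace (Sg * G * (1 - NormedSpace.exp ((-(2 * t)) • (G * H))))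

theorem tendsto_expectedLoss {ι : Type*} [Fintype ι] [DecidableEq ι] {Sg G H : Matrix ι ι ℝ}
    {σ : ℝ} (hG : G.PosDef) (hSg : Sg = σ ^ 2 • G⁻¹) (hH : H.PosSemidef) :
    Tendsto (expectedLoss Sg G H) atTop (𝓝 (σ ^ 2 / 4 * H.rank)) := by
  have hSgG : Sg * G = σ ^ 2 • (1 : Matrix ι ι ℝ) := by
    rw [hSg, smul_mul_assoc, nonsing_inv_mul _ ((isUnit_iff_isUnit_det _).mp hG.isUnit)]
  have hloss (t : ℝ) : expectedLoss Sg G H t =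
      σ ^ 2 / 4 * (Fintype.card ι - trace (NormedSpace.exp ((-(2 * t)) • (G * H)))) := by
    rw [expectedLoss, hSgG, smul_mul_assoc, one_mul, trace_smul, trace_sub, trace_one,
      smul_eq_mul]
    ring
  have htrace : Tendsto (fun t : ℝ => trace (NormedSpace.exp ((-(2 * t)) • (G * H)))) atTop
      (𝓝 (Fintype.card ι - H.rank)) :=
    (hG.tendsto_trace_exp_neg_smul_mul hH).comp (tendsto_id.const_mul_atTop two_pos)
  rw [funext hloss]
  convert (tendsto_const_nhds (x := (Fintype.card ι : ℝ)) |>.sub htrace).const_mul (σ ^ 2 / 4)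
    using 2
  ring

theorem rank_mono_expected_loss_general (n : ℕ)
    (G Sg H₁ H₂ : Matrix (Fin n) (Fin n) ℝ) (hG : G.PosDef)
    (σ : ℝ) (hSg : Sg = σ ^ 2 • G⁻¹)
    (hH₁ : H₁.PosSemidef) (hH₂ : H₂.PosSemidef) (hrank : H₁.rank ≤ H₂.rank)
    (L₁ L₂ : ℝ)
    (hL₁ : Tendsto
      (fun t : ℝ =>
        (1 / 4) * Matrix.trace (Sg * G * (1 - NormedSpace.exp ((-(2 * t)) • (G * H₁)))))
      atTop (nhds L₁))
    (hL₂ : Tendsto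
      (fun t : ℝ =>
        (1 / 4) * Matrix.trace (Sg * G * (1 - NormedSpace.exp ((-(2 * t)) • (G * H₂)))))
      atTop (nhds L₂)) :
    L₁ ≤ L₂ := by
  rw [tendsto_nhds_unique hL₁ (tendsto_expectedLoss hG hSg hH₁),
    tendsto_nhds_unique hL₂ (tendsto_expectedLoss hG hSg hH₂)]
  gcongr

/-- Proposition 4 (isotropic case `Σ·G = σ²·I`): a larger Hessian rank gives a larger
asymptotic expected loss. -/
theorem rank_mono_expected_loss (n : ℕ) (hn : 1 ≤ n)
    (G Sg H₁ H₂ : Matrix (Fin n) (Fin n) ℝ) (hG : G.PosDef)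
    (σ : ℝ) (hσ : 0 < σ) (hSg : Sg = σ ^ 2 • G⁻¹)
    (hH₁ : H₁.PosSemidef) (hH₂ : H₂.PosSemidef) (hrank : H₁.rank ≤ H₂.rank)
    (L₁ L₂ : ℝ)
    (hL₁ : Tendsto
      (fun t : ℝ =>
        (1 / 4) * Matrix.trace (Sg * G * (1 - NormedSpace.exp ((-(2 * t)) • (G * H₁)))))
      atTop (nhds L₁))
    (hL₂ : Tendsto
      (fun t : ℝ =>
        (1 / 4) * Matrix.trace (Sg * G * (1 - NormedSpace.exp ((-(2 * t)) • (G * H₂)))))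
      atTop (nhds L₂)) :
    L₁ ≤ L₂ :=
  rank_mono_expected_loss_general n G Sg H₁ H₂ hG σ hSg hH₁ hH₂ hrank L₁ L₂ hL₁ hL₂
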